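/- Every minor of a laminar matroid is laminar. -/

import Mathlib

open Set Matroid

variable {α : Type*}

/-- A circuit: a minimal dependent set. -/
def Matroid.IsCircuit' (M : Matroid α) (C : Set α) : Prop :=
  M.Dep C ∧ ∀ D, D ⊂ C → M.Indep D

/-- The circuit characterization of laminar matroids. -/
def Matroid.IsLaminar (M : Matroid α) : Prop :=
  ∀ C₁ C₂, M.IsCircuit' C₁ → M.IsCircuit' C₂ → (C₁ ∩ C₂).Nonempty →
    M.closure C₁ ⊆ M.closure C₂ ∨ M.closure C₂ ⊆ M.closure C₁

/-- A laminar family: any two intersecting members are comparable. -/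
def IsLaminarFamily (𝒜 : Set (Set α)) : Prop :=
  ∀ A ∈ 𝒜, ∀ B ∈ 𝒜, (A ∩ B).Nonempty → A ⊆ B ∨ B ⊆ A

/-- `M` is presented by the laminar family `𝒜` with capacities `c`. -/
def Matroid.IsLaminarPresBy (M : Matroid α) (E : Set α) (𝒜 : Set (Set α)) (c : Set α → ℕ) :
    Prop :=
  M.E = E ∧ ∀ I, M.Indep I ↔ I ⊆ E ∧ ∀ A ∈ 𝒜, (I ∩ A).ncard ≤ c A

/-- `M` has some laminar presentation (on its own ground set); this captures being
isomorphic to a laminar matroid `M(E, 𝒜, c)`. -/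
def Matroid.HasLaminarPres (M : Matroid α) : Prop :=
  ∃ (𝒜 : Set (Set α)) (c : Set α → ℕ), IsLaminarFamily 𝒜 ∧ (∀ A ∈ 𝒜, A ⊆ M.E) ∧
    M.IsLaminarPresBy M.E 𝒜 c

/-- Deletion of a set of elements. -/
def Matroid.del (M : Matroid α) (X : Set α) : Matroid α := M ↾ (M.E \ X)

/-- Contraction of a set of elements, defined via duality. -/
def Matroid.con (M : Matroid α) (X : Set α) : Matroid α := (M✶ ↾ (M.E \ X))✶

/-- `IsMinor M N` means `N` is obtained from `M` by a sequence of single-element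
deletions and contractions. -/
inductive IsMinor : Matroid α → Matroid α → Prop
  | refl (M : Matroid α) : IsMinor M M
  | del (M N : Matroid α) (e : α) : IsMinor M N → IsMinor M (N.del {e})
  | con (M N : Matroid α) (e : α) : IsMinor M N → IsMinor M (N.con {e})

/-!
Deleting `D` keeps exactly the circuits of `M` avoiding `D` and intersects closures with the
complement of `D`, so comparable closures stay comparable. For a circuit `C` of `M ／ K` there is a
circuit `C'` of `M` with `C ⊆ C' ⊆ C ∪ K`, whence `(M ／ K).closure C = M.closure (C' ∪ K) \ K`;
comparability of the closures of such lifts `C'` survives adding `K` and removing it again.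
-/

namespace Matroid

variable {M : Matroid α} {C K X Y : Set α}

lemma isCircuit'_iff : M.IsCircuit' C ↔ M.IsCircuit C := by
  rw [isCircuit_iff_forall_ssubset]
  rfl

lemma isLaminar_iff : M.IsLaminar ↔ ∀ ⦃C₁ C₂⦄, M.IsCircuit C₁ → M.IsCircuit C₂ →
    (C₁ ∩ C₂).Nonempty → M.closure C₁ ⊆ M.closure C₂ ∨ M.closure C₂ ⊆ M.closure C₁ := by
  simp only [IsLaminar, isCircuit'_iff]

lemma closure_union_subset_closure_union (h : M.closure X ⊆ M.closure Y) (K : Set α) :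
    M.closure (X ∪ K) ⊆ M.closure (Y ∪ K) := by
  rw [← closure_union_closure_left_eq, ← M.closure_union_closure_left_eq Y]
  exact M.closure_subset_closure (union_subset_union_left K h)

lemma IsCircuit.exists_isCircuit_closure_contract_eq (hC : (M ／ K).IsCircuit C) :
    ∃ C', M.IsCircuit C' ∧ C ⊆ C' ∧ (M ／ K).closure C = M.closure (C' ∪ K) \ K := by
  obtain ⟨C', hC', hCC', hC'CK⟩ := hC.exists_subset_isCircuit_of_contract
  have hunion : C' ∪ K = C ∪ K :=
    subset_antisymm (union_subset hC'CK subset_union_right) (union_subset_union_left K hCC')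
  exact ⟨C', hC', hCC', by rw [contract_closure_eq, hunion]⟩

lemma IsLaminar.delete (hM : M.IsLaminar) (D : Set α) : (M ＼ D).IsLaminar := by
  rw [isLaminar_iff] at hM ⊢
  intro C₁ C₂ h₁ h₂ hne
  rw [delete_isCircuit_iff] at h₁ h₂
  rw [delete_closure_eq_of_disjoint _ h₁.2, delete_closure_eq_of_disjoint _ h₂.2]
  exact (hM h₁.1 h₂.1 hne).imp sdiff_subset_sdiff_left sdiff_subset_sdiff_left

lemma IsLaminar.contract (hM : M.IsLaminar) (K : Set α) : (M ／ K).IsLaminar := by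
  rw [isLaminar_iff] at hM ⊢
  intro C₁ C₂ h₁ h₂ hne
  obtain ⟨D₁, hD₁, hCD₁, hcl₁⟩ := h₁.exists_isCircuit_closure_contract_eq
  obtain ⟨D₂, hD₂, hCD₂, hcl₂⟩ := h₂.exists_isCircuit_closure_contract_eq
  rw [hcl₁, hcl₂]
  exact (hM hD₁ hD₂ (hne.mono (inter_subset_inter hCD₁ hCD₂))).imp
    (fun h ↦ sdiff_subset_sdiff_left (closure_union_subset_closure_union h K))
    (fun h ↦ sdiff_subset_sdiff_left (closure_union_subset_closure_union h K))

end Matroid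

theorem stmt_11_general (M N : Matroid α) (hM : M.IsLaminar)
    (hN : _root_.IsMinor M N) : N.IsLaminar := by
  induction hN with
  | refl => exact hM
  | del N e _ ih => exact ih.delete {e}
  | con N e _ ih => exact ih.contract {e}

theorem stmt_11 (M N : Matroid α) (hfin : M.E.Finite) (hM : M.IsLaminar)
    (hN : _root_.IsMinor M N) : N.IsLaminar :=
  stmt_11_general M N hM hN
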